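/- With notation as in the construction of the uniform Cantor set E(n,c), the Lebesgue measure of E(n,c) is positive if and only if the sequence (n_k c_k) is summable, i.e. ∑_{k=1}^∞ n_k c_k < ∞. -/
import Mathlib


open Finset MeasureTheory Filter Topology
open scoped ENNReal NNReal

/-- Length of a level-`k` component of the uniform Cantor set `E(n,c)`. -/
noncomputable def cdelta (n : ℕ → ℕ) (c : ℕ → ℝ) (k : ℕ) : ℝ :=
  ∏ i ∈ Finset.Icc 1 k, (1 - ((n i : ℝ) - 1) * c i) / (n i : ℝ)

/-- Length of a level-`k` gap of the uniform Cantor set `E(n,c)`. -/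
noncomputable def ceps (n : ℕ → ℕ) (c : ℕ → ℝ) (k : ℕ) : ℝ :=
  c k * cdelta n c (k - 1)

/-- Left endpoint of the level-`k` component indexed by the word `w` (positions `1,…,k`). -/
noncomputable def leftpt (n : ℕ → ℕ) (c : ℕ → ℝ) (w : ℕ → ℕ) (k : ℕ) : ℝ :=
  ∑ j ∈ Finset.Icc 1 k, ((w j : ℝ) - 1) * (cdelta n c j + ceps n c j)

/-- `w` is a word of length `k`: `1 ≤ w j ≤ n j` for `1 ≤ j ≤ k`. -/
def IsWord (n : ℕ → ℕ) (w : ℕ → ℕ) (k : ℕ) : Prop :=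
  ∀ j, 1 ≤ j → j ≤ k → 1 ≤ w j ∧ w j ≤ n j

/-- The level-`k` component `I_w` of the uniform Cantor set. -/
noncomputable def cInt (n : ℕ → ℕ) (c : ℕ → ℝ) (w : ℕ → ℕ) (k : ℕ) : Set ℝ :=
  Set.Icc (leftpt n c w k) (leftpt n c w k + cdelta n c k)

/-- The set `E_k`, union of all level-`k` components. -/
def levelSet (n : ℕ → ℕ) (c : ℕ → ℝ) (k : ℕ) : Set ℝ :=
  ⋃ w ∈ {w : ℕ → ℕ | IsWord n w k}, cInt n c w k

/-- The uniform Cantor set `E(n,c) = ⋂_k E_k`. -/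
def uniformCantorSet (n : ℕ → ℕ) (c : ℕ → ℝ) : Set ℝ :=
  ⋂ k, levelSet n c k

/-- Standing assumptions on the data: `n_k ≥ 2`, `c_k ∈ (0,1)`, `(n_k - 1) c_k < 1`. -/
def CantorParams (n : ℕ → ℕ) (c : ℕ → ℝ) : Prop :=
  ∀ k, 1 ≤ k → 2 ≤ n k ∧ 0 < c k ∧ c k < 1 ∧ ((n k : ℝ) - 1) * c k < 1

/-- `p` is an `n`-matching sequence of positive probability vectors. -/
def MatchingSeq (n : ℕ → ℕ) (p : ℕ → ℕ → ℝ) : Prop :=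
  ∀ k, 1 ≤ k → (∀ i, 1 ≤ i → i ≤ n k → 0 < p k i) ∧ ∑ i ∈ Finset.Icc 1 (n k), p k i = 1

/-- `μ` is the Borel probability measure on `E(n,c)` determined by the matching sequence `p`:
`μ(I_{wi}) = p_{k,i} μ(I_w)`. -/
def MatchingMeasure (n : ℕ → ℕ) (c : ℕ → ℝ) (p : ℕ → ℕ → ℝ) (μ : Measure ℝ) : Prop :=
  IsProbabilityMeasure μ ∧ μ (uniformCantorSet n c)ᶜ = 0 ∧
    ∀ k, 1 ≤ k → ∀ w : ℕ → ℕ, IsWord n w (k - 1) → ∀ i, 1 ≤ i → i ≤ n k →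
      μ (cInt n c (Function.update w k i) k) =
        ENNReal.ofReal (p k i) * μ (cInt n c w (k - 1))

/-- `μ` is doubling with constant `C` on the metric space `E` (balls of `E`). -/
def DoublingOn (μ : Measure ℝ) (E : Set ℝ) (C : ℝ≥0∞) : Prop :=
  ∀ x ∈ E, ∀ r : ℝ, 0 < r →
    0 < μ (Metric.ball x (2 * r) ∩ E) ∧
      μ (Metric.ball x (2 * r) ∩ E) ≤ C * μ (Metric.ball x r ∩ E) ∧
      μ (Metric.ball x (2 * r) ∩ E) < ⊤

/-- The vector `(p 1, …, p k)` is `C`-uniform: any two adjacent (overlapping allowed) sums of `l`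
consecutive entries are comparable within the factor `C`. -/
def IsUniform (C : ℝ) (k : ℕ) (p : ℕ → ℝ) : Prop :=
  ∀ i j l : ℕ, i ≤ j → j ≤ i + l → j + l ≤ k →
    C⁻¹ * (∑ t ∈ Finset.Ioc j (j + l), p t) ≤ (∑ t ∈ Finset.Ioc i (i + l), p t) ∧
      (∑ t ∈ Finset.Ioc i (i + l), p t) ≤ C * ∑ t ∈ Finset.Ioc j (j + l), p t


section aux
variable {n : ℕ → ℕ} {c : ℕ → ℝ} (h : CantorParams n c)

lemma cdelta_zero : cdelta n c 0 = 1 := by simp [cdelta]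

lemma cdelta_succ (k : ℕ) : cdelta n c (k+1)
    = cdelta n c k * ((1 - ((n (k+1) : ℝ) - 1) * c (k+1)) / (n (k+1) : ℝ)) := by
  rw [cdelta, cdelta, Finset.prod_Icc_succ_top (Nat.le_add_left 1 k)]

include h

lemma factor_pos {k : ℕ} (hk : 1 ≤ k) : 0 < 1 - ((n k : ℝ) - 1) * c k := by
  have := (h k hk).2.2.2; linarith

lemma n_pos {k : ℕ} (hk : 1 ≤ k) : (0:ℝ) < (n k : ℝ) := by
  have := (h k hk).1; positivity

lemma cdelta_pos (k : ℕ) : 0 < cdelta n c k := by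
  induction k with
  | zero => simp [cdelta_zero]
  | succ m ih =>
    rw [cdelta_succ]
    exact mul_pos ih (div_pos (factor_pos h (Nat.le_add_left 1 m)) (n_pos h (Nat.le_add_left 1 m)))

lemma ceps_pos {k : ℕ} (hk : 1 ≤ k) : 0 < ceps n c k :=
  mul_pos (h k hk).2.1 (cdelta_pos h _)

lemma step_id (k : ℕ) :
    ((n (k+1) : ℝ) - 1) * (cdelta n c (k+1) + ceps n c (k+1))
      = cdelta n c k - cdelta n c (k+1) := by
  have hn : (n (k+1) : ℝ) ≠ 0 := ne_of_gt (n_pos h (Nat.le_add_left 1 k))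
  rw [cdelta_succ, ceps]
  simp only [Nat.add_sub_cancel]
  field_simp
  ring

lemma factor_le_one {k : ℕ} (hk : 1 ≤ k) :
    (1 - ((n k : ℝ) - 1) * c k) / (n k : ℝ) ≤ 1 := by
  rw [div_le_one (n_pos h hk)]
  have h2 : (2:ℝ) ≤ (n k : ℝ) := by exact_mod_cast (h k hk).1
  nlinarith [(h k hk).2.1, (h k hk).1, mul_pos (sub_pos.2 (by linarith : (1:ℝ) < (n k:ℝ))) (h k hk).2.1]

lemma cdelta_le (k : ℕ) : cdelta n c (k+1) ≤ cdelta n c k := by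
  rw [cdelta_succ]
  nlinarith [cdelta_pos h (n := n) (c := c) k, factor_le_one h (n := n) (c := c) (Nat.le_add_left 1 k),
    div_pos (factor_pos h (n:=n) (c:=c) (Nat.le_add_left 1 k)) (n_pos h (n:=n) (c:=c) (Nat.le_add_left 1 k))]

lemma cdelta_antitone : Antitone (cdelta n c) :=
  antitone_nat_of_succ_le (cdelta_le h)

lemma sum_step {m k : ℕ} (hmk : m ≤ k) :
    ∑ t ∈ Finset.Ioc m k, ((n t : ℝ) - 1) * (cdelta n c t + ceps n c t)
      = cdelta n c m - cdelta n c k := by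
  induction k, hmk using Nat.le_induction with
  | base => simp
  | succ k hmk ih =>
    rw [Finset.sum_Ioc_succ_top hmk, ih, step_id h k]
    ring

lemma leftpt_succ (w : ℕ → ℕ) (k : ℕ) :
    leftpt n c w (k+1) = leftpt n c w k
      + ((w (k+1) : ℝ) - 1) * (cdelta n c (k+1) + ceps n c (k+1)) := by
  rw [leftpt, leftpt, Finset.sum_Icc_succ_top (Nat.le_add_left 1 k)]

lemma cInt_nested {w : ℕ → ℕ} {k : ℕ} (hw1 : 1 ≤ w (k+1)) (hw2 : w (k+1) ≤ n (k+1)) :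
    cInt n c w (k+1) ⊆ cInt n c w k := by
  have hstep := step_id h (n := n) (c := c) k
  have hde : 0 < cdelta n c (k+1) + ceps n c (k+1) :=
    add_pos (cdelta_pos h _) (ceps_pos h (Nat.le_add_left 1 k))
  have hw1' : (1:ℝ) ≤ (w (k+1) : ℝ) := by exact_mod_cast hw1
  have hw2' : ((w (k+1) : ℝ)) ≤ (n (k+1) : ℝ) := by exact_mod_cast hw2
  apply Set.Icc_subset_Icc
  · rw [leftpt_succ h]; nlinarith
  · rw [leftpt_succ h]
    have : ((w (k+1):ℝ) - 1) * (cdelta n c (k+1) + ceps n c (k+1))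
        ≤ ((n (k+1):ℝ) - 1) * (cdelta n c (k+1) + ceps n c (k+1)) := by nlinarith
    linarith

lemma separated {k : ℕ} {v w : ℕ → ℕ} (hv : IsWord n v k) (hw : IsWord n w k)
    {j : ℕ} (hj1 : 1 ≤ j) (hjk : j ≤ k) (hlt : v j < w j)
    (hag : ∀ t, t < j → v t = w t) :
    leftpt n c v k + cdelta n c k < leftpt n c w k := by
  have key : leftpt n c w k - leftpt n c v k
      = ∑ t ∈ Finset.Icc 1 k, ((w t : ℝ) - (v t : ℝ)) * (cdelta n c t + ceps n c t) := by
    rw [leftpt, leftpt, ← Finset.sum_sub_distrib]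
    apply Finset.sum_congr rfl
    intro t _; ring
  -- split Icc 1 k = Icc 1 (j-1) ∪ {j} ∪ Ioc j k ; terms below j vanish
  have hsplit : Finset.Icc 1 k = Finset.Ico 1 j ∪ Finset.Icc j k := by
    ext t; simp [Finset.mem_Icc, Finset.mem_Ico]; omega
  have hdisj : Disjoint (Finset.Ico 1 j) (Finset.Icc j k) := by
    simp [Finset.disjoint_left, Finset.mem_Ico, Finset.mem_Icc]
    omega
  have hzero : ∑ t ∈ Finset.Ico 1 j, ((w t : ℝ) - (v t : ℝ)) * (cdelta n c t + ceps n c t) = 0 := by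
    apply Finset.sum_eq_zero
    intro t ht
    rw [Finset.mem_Ico] at ht
    rw [hag t ht.2]; ring
  have hsplit2 : Finset.Icc j k = insert j (Finset.Ioc j k) := by
    rw [Finset.Icc_eq_cons_Ioc hjk, Finset.cons_eq_insert]
  have hjnot : j ∉ Finset.Ioc j k := by simp
  have keysum : leftpt n c w k - leftpt n c v k
      = ((w j : ℝ) - (v j : ℝ)) * (cdelta n c j + ceps n c j)
        + ∑ t ∈ Finset.Ioc j k, ((w t : ℝ) - (v t : ℝ)) * (cdelta n c t + ceps n c t) := by
    rw [key, hsplit, Finset.sum_union hdisj, hzero, hsplit2, Finset.sum_insert hjnot]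
    ring
  have hjterm : (1:ℝ) ≤ (w j : ℝ) - (v j : ℝ) := by
    have : v j + 1 ≤ w j := hlt
    have := (Nat.cast_le (α := ℝ)).2 this
    push_cast at this ⊢; linarith
  have hde : 0 < cdelta n c j + ceps n c j := add_pos (cdelta_pos h _) (ceps_pos h hj1)
  have htail : ∑ t ∈ Finset.Ioc j k, ((w t : ℝ) - (v t : ℝ)) * (cdelta n c t + ceps n c t)
      ≥ -(cdelta n c j - cdelta n c k) := by
    rw [← sum_step h hjk, ← Finset.sum_neg_distrib]
    apply Finset.sum_le_sum
    intro t ht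
    rw [Finset.mem_Ioc] at ht
    have ht1 : 1 ≤ t := hj1.trans (Nat.le_of_lt ht.1)
    have hde' : 0 < cdelta n c t + ceps n c t := add_pos (cdelta_pos h _) (ceps_pos h ht1)
    have h1 : (1:ℝ) ≤ (w t : ℝ) := by exact_mod_cast (hw t ht1 ht.2).1
    have h2 : (v t : ℝ) ≤ (n t : ℝ) := by exact_mod_cast (hv t ht1 ht.2).2
    nlinarith
  have heps : 0 < ceps n c j := ceps_pos h hj1
  nlinarith [mul_le_mul_of_nonneg_right hjterm (le_of_lt hde)]
end aux

noncomputable local instance : DecidableEq (ℕ → ℕ) := Classical.decEq _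

/-- canonical words of length `k` as a finset -/
noncomputable def wordFinset (n : ℕ → ℕ) (k : ℕ) : Finset (ℕ → ℕ) :=
  ((Finset.Icc 1 k).pi (fun j => Finset.Icc 1 (n j))).image
    (fun f j => if hj : j ∈ Finset.Icc 1 k then f j hj else 1)

section words
variable {n : ℕ → ℕ} {c : ℕ → ℝ}

lemma mem_wordFinset_isWord {k : ℕ} {w : ℕ → ℕ} (hw : w ∈ wordFinset n k) :
    IsWord n w k := by
  rw [wordFinset, Finset.mem_image] at hw
  obtain ⟨f, hf, rfl⟩ := hw
  intro j hj1 hjk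
  have hj : j ∈ Finset.Icc 1 k := Finset.mem_Icc.2 ⟨hj1, hjk⟩
  have := (Finset.mem_pi.1 hf) j hj
  rw [Finset.mem_Icc] at this
  beta_reduce
  rw [dif_pos hj]
  exact this

lemma mem_wordFinset_out {k : ℕ} {w : ℕ → ℕ} (hw : w ∈ wordFinset n k)
    {j : ℕ} (hj : j ∉ Finset.Icc 1 k) : w j = 1 := by
  rw [wordFinset, Finset.mem_image] at hw
  obtain ⟨f, hf, rfl⟩ := hw
  simp [hj]

lemma leftpt_congr {k : ℕ} {v w : ℕ → ℕ} (hag : ∀ j, 1 ≤ j → j ≤ k → v j = w j) :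
    leftpt n c v k = leftpt n c w k := by
  apply Finset.sum_congr rfl
  intro j hj
  rw [Finset.mem_Icc] at hj
  rw [hag j hj.1 hj.2]

lemma levelSet_eq_biUnion (k : ℕ) :
    levelSet n c k = ⋃ w ∈ wordFinset n k, cInt n c w k := by
  apply Set.Subset.antisymm
  · rintro x hx
    rw [levelSet, Set.mem_iUnion₂] at hx
    obtain ⟨w, hw, hx⟩ := hx
    set w' : ℕ → ℕ := fun j => if hj : j ∈ Finset.Icc 1 k then w j else 1 with hw'
    have hmem : w' ∈ wordFinset n k := by
      rw [wordFinset, Finset.mem_image]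
      refine ⟨fun j _ => w j, ?_, ?_⟩
      · rw [Finset.mem_pi]
        intro j hj
        rw [Finset.mem_Icc] at hj ⊢
        exact hw j hj.1 hj.2
      · rfl
    refine Set.mem_iUnion₂.2 ⟨w', hmem, ?_⟩
    have : leftpt n c w k = leftpt n c w' k := by
      apply leftpt_congr
      intro j hj1 hjk
      rw [hw']
      beta_reduce
      rw [dif_pos (Finset.mem_Icc.2 ⟨hj1, hjk⟩)]
    rwa [cInt, ← this]
  · rintro x hx
    rw [Set.mem_iUnion₂] at hx
    obtain ⟨w, hw, hx⟩ := hx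
    exact Set.mem_iUnion₂.2 ⟨w, mem_wordFinset_isWord hw, hx⟩

lemma wordFinset_card (h : CantorParams n c) (k : ℕ) :
    (wordFinset n k).card = ∏ j ∈ Finset.Icc 1 k, n j := by
  rw [wordFinset, Finset.card_image_of_injOn, Finset.card_pi]
  · apply Finset.prod_congr rfl
    intro j _
    rw [Nat.card_Icc]
    omega
  · intro f hf g hg hfg
    funext j hj
    have := congrFun hfg j
    simpa [hj] using this

lemma pairwiseDisjoint_words (h : CantorParams n c) (k : ℕ) :
    (↑(wordFinset n k) : Set (ℕ → ℕ)).PairwiseDisjoint (fun w => cInt n c w k) := by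
  intro v hv w hw hvw
  rw [Finset.mem_coe] at hv hw
  -- find least index where they differ
  have hex : ∃ j, v j ≠ w j := by
    by_contra hc
    push_neg at hc
    exact hvw (funext hc)
  classical
  let j := Nat.find hex
  have hj : v j ≠ w j := Nat.find_spec hex
  have hag : ∀ t, t < j → v t = w t := fun t ht => by
    by_contra hc; exact Nat.find_min hex ht hc
  have hjIcc : j ∈ Finset.Icc 1 k := by
    by_contra hc
    rw [mem_wordFinset_out hv hc, mem_wordFinset_out hw hc] at hj
    exact hj rfl
  rw [Finset.mem_Icc] at hjIcc
  have hvword := mem_wordFinset_isWord hv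
  have hwword := mem_wordFinset_isWord hw
  have key : ∀ a b : ℕ → ℕ, IsWord n a k → IsWord n b k → a j < b j →
      (∀ t, t < j → a t = b t) → Disjoint (cInt n c a k) (cInt n c b k) := by
    intro a b ha hb hab hag2
    have hsep : leftpt n c a k + cdelta n c k < leftpt n c b k :=
      separated h ha hb hjIcc.1 hjIcc.2 hab hag2
    rw [Set.disjoint_left]
    rintro x ⟨_, hx2⟩ ⟨hx3, _⟩
    linarith
  rcases Nat.lt_or_ge (v j) (w j) with hlt | hge
  · exact key v w hvword hwword hlt hag
  · exact (key w v hwword hvword (lt_of_le_of_ne hge (Ne.symm hj))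
      (fun t ht => (hag t ht).symm)).symm
end words

section meas
variable {n : ℕ → ℕ} {c : ℕ → ℝ}

lemma volume_levelSet (h : CantorParams n c) (k : ℕ) :
    volume (levelSet n c k)
      = ENNReal.ofReal (∏ i ∈ Finset.Icc 1 k, (1 - ((n i : ℝ) - 1) * c i)) := by
  classical
  rw [levelSet_eq_biUnion, measure_biUnion_finset (pairwiseDisjoint_words h k)
    (fun w _ => measurableSet_Icc)]
  have hterm : ∀ w ∈ wordFinset n k, volume (cInt n c w k) = ENNReal.ofReal (cdelta n c k) := by
    intro w _
    rw [cInt, Real.volume_Icc]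
    congr 1
    ring
  rw [Finset.sum_congr rfl hterm, Finset.sum_const, wordFinset_card h k, nsmul_eq_mul]
  have hd : 0 ≤ cdelta n c k := le_of_lt (cdelta_pos h k)
  rw [← ENNReal.ofReal_natCast, ← ENNReal.ofReal_mul (by positivity)]
  congr 1
  rw [cdelta]
  push_cast
  rw [← Finset.prod_mul_distrib]
  apply Finset.prod_congr rfl
  intro i hi
  rw [Finset.mem_Icc] at hi
  rw [mul_div_cancel₀ _ (ne_of_gt (n_pos h hi.1))]

lemma levelSet_antitone (h : CantorParams n c) : Antitone (levelSet n c) := by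
  apply antitone_nat_of_succ_le
  intro k
  rintro x hx
  rw [levelSet, Set.mem_iUnion₂] at hx ⊢
  obtain ⟨w, hw, hx⟩ := hx
  exact ⟨w, fun j hj1 hjk => hw j hj1 (hjk.trans (Nat.le_succ k)),
    cInt_nested h (hw (k+1) (Nat.le_add_left 1 k) le_rfl).1
      (hw (k+1) (Nat.le_add_left 1 k) le_rfl).2 hx⟩

lemma volume_cantor (h : CantorParams n c) :
    volume (uniformCantorSet n c)
      = ⨅ k, ENNReal.ofReal (∏ i ∈ Finset.Icc 1 k, (1 - ((n i : ℝ) - 1) * c i)) := by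
  rw [uniformCantorSet, Antitone.measure_iInter (levelSet_antitone h)]
  · exact iInf_congr (fun k => volume_levelSet h k)
  · intro k
    rw [levelSet_eq_biUnion]
    exact (MeasurableSet.biUnion (wordFinset n k).countable_toSet
      (fun w _ => measurableSet_Icc)).nullMeasurableSet
  · refine ⟨0, ?_⟩
    rw [volume_levelSet h 0]
    simp
end meas

section final
variable {n : ℕ → ℕ} {c : ℕ → ℝ}

-- abbreviations inside proofs: a i = ((n i:ℝ)-1)*c i ; P k = ∏_{Icc 1 k} (1 - a i)

lemma P_pos (h : CantorParams n c) (k : ℕ) :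
    0 < ∏ i ∈ Finset.Icc 1 k, (1 - ((n i : ℝ) - 1) * c i) :=
  Finset.prod_pos (fun i hi => factor_pos h (Finset.mem_Icc.1 hi).1)

lemma a_pos (h : CantorParams n c) {i : ℕ} (hi : 1 ≤ i) : 0 < ((n i : ℝ) - 1) * c i := by
  have h2 : (2:ℝ) ≤ (n i : ℝ) := by exact_mod_cast (h i hi).1
  nlinarith [(h i hi).2.1]

lemma P_antitone (h : CantorParams n c) :
    Antitone (fun k => ∏ i ∈ Finset.Icc 1 k, (1 - ((n i : ℝ) - 1) * c i)) := by
  apply antitone_nat_of_succ_le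
  intro k
  rw [Finset.prod_Icc_succ_top (Nat.le_add_left 1 k)]
  have h1 := P_pos h (n := n) (c := c) k
  have h2 := factor_pos h (n := n) (c := c) (Nat.le_add_left 1 k)
  have h3 := a_pos h (n := n) (c := c) (Nat.le_add_left 1 k)
  nlinarith

lemma summable_equiv (h : CantorParams n c) :
    Summable (fun k => (n k : ℝ) * c k)
      ↔ Summable (fun i => ((n (i+1) : ℝ) - 1) * c (i+1)) := by
  constructor
  · intro hs
    apply Summable.of_nonneg_of_le
      (fun i => le_of_lt (a_pos h (Nat.le_add_left 1 i)))
      (fun i => ?_) ((summable_nat_add_iff 1).2 hs)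
    have hc := (h (i+1) (Nat.le_add_left 1 i)).2.1
    have hn : (1:ℝ) ≤ (n (i+1) : ℝ) := by
      have := (h (i+1) (Nat.le_add_left 1 i)).1; exact_mod_cast Nat.one_le_of_lt this
    nlinarith
  · intro hs
    refine (summable_nat_add_iff 1).1 (Summable.of_nonneg_of_le (fun i => ?_) (fun i => ?_)
      (hs.mul_left 2))
    · have hc := (h (i+1) (Nat.le_add_left 1 i)).2.1
      have hn : (0:ℝ) ≤ (n (i+1) : ℝ) := by positivity
      positivity
    · have hc := (h (i+1) (Nat.le_add_left 1 i)).2.1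
      have h2 : (2:ℝ) ≤ (n (i+1) : ℝ) := by exact_mod_cast (h (i+1) (Nat.le_add_left 1 i)).1
      nlinarith

lemma prod_ge_one_sub_sum {a : ℕ → ℝ} (ha : ∀ i, 1 ≤ i → 0 ≤ a i)
    (ha1 : ∀ i, 1 ≤ i → a i ≤ 1) {N k : ℕ} (hNk : N ≤ k) :
    1 - ∑ i ∈ Finset.Ioc N k, a i ≤ ∏ i ∈ Finset.Ioc N k, (1 - a i) := by
  induction k, hNk using Nat.le_induction with
  | base => simp
  | succ k hNk ih =>
    rw [Finset.sum_Ioc_succ_top hNk, Finset.prod_Ioc_succ_top hNk]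
    have hs : 0 ≤ ∑ i ∈ Finset.Ioc N k, a i :=
      Finset.sum_nonneg (fun i hi => ha i (by have := (Finset.mem_Ioc.1 hi).1; omega))
    have hk1 : 0 ≤ a (k+1) := ha (k+1) (Nat.le_add_left 1 k)
    have hk2 : a (k+1) ≤ 1 := ha1 (k+1) (Nat.le_add_left 1 k)
    nlinarith [mul_le_mul_of_nonneg_right ih (by linarith : 0 ≤ 1 - a (k+1)),
      mul_nonneg hs hk1]

end final

theorem stmt1 (n : ℕ → ℕ) (c : ℕ → ℝ) (h : CantorParams n c) :
    0 < volume (uniformCantorSet n c) ↔ Summable (fun k => (n k : ℝ) * c k) := by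
  rw [volume_cantor h, summable_equiv h]
  set a : ℕ → ℝ := fun i => ((n i : ℝ) - 1) * c i with ha_def
  set P : ℕ → ℝ := fun k => ∏ i ∈ Finset.Icc 1 k, (1 - a i) with hP_def
  have hIoc : ∀ k, Finset.Icc 1 k = Finset.Ioc 0 k := by
    intro k; ext t; simp [Finset.mem_Icc, Finset.mem_Ioc]; omega
  constructor
  · -- positivity ⇒ summable ; contrapositive
    intro hpos
    by_contra hns
    have hb : ∀ i, 0 ≤ a (i+1) := fun i => le_of_lt (a_pos h (Nat.le_add_left 1 i))
    have htend : Tendsto (fun k => ∑ i ∈ Finset.range k, a (i+1)) atTop atTop :=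
      (not_summable_iff_tendsto_nat_atTop_of_nonneg hb).1 hns
    have hSk : ∀ k, ∑ i ∈ Finset.range k, a (i+1) = ∑ i ∈ Finset.Icc 1 k, a i := by
      intro k
      rw [← Finset.Ico_add_one_right_eq_Icc, Finset.sum_Ico_eq_sum_range]
      simp [add_comm]
    have hPle : ∀ k, P k ≤ Real.exp (-(∑ i ∈ Finset.range k, a (i+1))) := by
      intro k
      rw [hSk k, ← Finset.sum_neg_distrib, Real.exp_sum]
      apply Finset.prod_le_prod
      · intro i hi; exact le_of_lt (factor_pos h (Finset.mem_Icc.1 hi).1)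
      · intro i hi
        have := Real.add_one_le_exp (-(a i))
        linarith
    have hP0 : Tendsto P atTop (𝓝 0) := by
      apply squeeze_zero (fun k => le_of_lt (P_pos h k)) hPle
      exact (Real.tendsto_exp_atBot).comp (tendsto_neg_atTop_atBot.comp htend)
    have hof : Tendsto (fun k => ENNReal.ofReal (P k)) atTop (𝓝 0) := by
      rw [← ENNReal.ofReal_zero]
      exact (ENNReal.continuous_ofReal.tendsto 0).comp hP0
    have hle : (⨅ k, ENNReal.ofReal (P k)) ≤ 0 :=
      ge_of_tendsto' hof (fun k => iInf_le _ k)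
    rw [le_zero_iff] at hle
    rw [hle] at hpos
    exact lt_irrefl 0 hpos
  · -- summable ⇒ positivity
    intro hs
    have htends := hs.hasSum.tendsto_sum_nat
    have hcauchy : CauchySeq (fun k => ∑ i ∈ Finset.range k, a (i+1)) := htends.cauchySeq
    obtain ⟨N, hN⟩ := Metric.cauchySeq_iff'.1 hcauchy (1/2) (by norm_num)
    have hSk : ∀ k, ∑ i ∈ Finset.range k, a (i+1) = ∑ i ∈ Finset.Icc 1 k, a i := by
      intro k
      rw [← Finset.Ico_add_one_right_eq_Icc, Finset.sum_Ico_eq_sum_range]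
      simp [add_comm]
    have hkey : ∀ k, P N / 2 ≤ P k := by
      intro k
      rcases le_or_gt k N with hkN | hNk
      · have : P N ≤ P k := P_antitone h hkN
        have := P_pos h (n := n) (c := c) N
        linarith
      · have hsum : ∑ i ∈ Finset.Ioc N k, a i < 1/2 := by
          have := hN k (le_of_lt hNk)
          rw [Real.dist_eq, hSk, hSk] at this
          have hsplit : ∑ i ∈ Finset.Icc 1 N, a i + ∑ i ∈ Finset.Ioc N k, a i
              = ∑ i ∈ Finset.Icc 1 k, a i := by
            rw [hIoc, hIoc, Finset.sum_Ioc_consecutive _ (Nat.zero_le N) (le_of_lt hNk)]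
          rw [abs_lt] at this
          linarith
        have hprodsplit : P k = P N * ∏ i ∈ Finset.Ioc N k, (1 - a i) := by
          rw [hP_def]
          beta_reduce
          rw [hIoc, hIoc, ← Finset.prod_Ioc_consecutive _ (Nat.zero_le N) (le_of_lt hNk)]
        have hge : 1 - ∑ i ∈ Finset.Ioc N k, a i ≤ ∏ i ∈ Finset.Ioc N k, (1 - a i) :=
          prod_ge_one_sub_sum (fun i hi => le_of_lt (a_pos h hi))
            (fun i hi => by have := factor_pos h (n := n) (c := c) hi; linarith)
            (le_of_lt hNk)
        have hPN := P_pos h (n := n) (c := c) N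
        rw [hprodsplit]
        nlinarith
    have hPN2 : 0 < P N / 2 := by have := P_pos h (n := n) (c := c) N; linarith
    calc (0:ℝ≥0∞) < ENNReal.ofReal (P N / 2) := ENNReal.ofReal_pos.2 hPN2
      _ ≤ ⨅ k, ENNReal.ofReal (P k) := le_iInf (fun k => ENNReal.ofReal_le_ofReal (hkey k))
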